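/- Let k be a field of characteristic p > 2 and Z_n the n×n Hankel matrix with entries z_{i+j−1}. Set f_m = perm(Z_m) (the permanent of the upper-left m×m Hankel matrix in z₁,…,z_{2m−1}). Then for all n ≥ 1, in k[z₁,…,z_{2n−1}] modulo the ideal (z₁^p, z₂^p, …, z_{2n−1}^p), the following congruence holds: f_{n−1} · f_n^{p−1} · (∏_{i=1}^{n−1} z_{2i+1}) · (∏_{i=1}^{n−1} z_{2i})^{p−3} ≡ (−1)^{n+1} (∏_{i=1}^{2n−1} z_i)^{p−1}. -/

import Mathlib

open MvPolynomial

/-- The `m × m` Hankel matrix of indeterminates: the variable `X j` stands for `z_j`, and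
the `(i,j)` entry (`0`-indexed) is `z_{i+j+1}`. -/
noncomputable def hankelMatrix (k : Type*) [Field k] (m : ℕ) :
    Matrix (Fin m) (Fin m) (MvPolynomial ℕ k) :=
  fun i j => X (i.val + j.val + 1)

namespace Stmt9Aux

open Finset Equiv

variable {k : Type*} [Field k]

/-! ### Basic monomial lemmas -/

lemma monomial_prod {ι : Type*} (s : Finset ι) (f : ι → (ℕ →₀ ℕ)) :
    (∏ i ∈ s, monomial (f i) (1 : k)) = monomial (∑ i ∈ s, f i) 1 := by
  induction s using Finset.cons_induction with
  | empty => simp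
  | cons a s ha ih => rw [Finset.prod_cons, Finset.sum_cons, ih, monomial_mul, mul_one]

lemma X_eq (j : ℕ) : (X j : MvPolynomial ℕ k) = monomial (Finsupp.single j 1) 1 := by
  rw [← X_pow_eq_monomial, pow_one]

lemma prodX {m : ℕ} (g : Fin m → ℕ) :
    (∏ i, (X (g i) : MvPolynomial ℕ k)) = monomial (∑ i, Finsupp.single (g i) 1) 1 := by
  simp_rw [X_eq]
  exact monomial_prod _ _

/-! ### usage vectors -/

lemma usage_apply {m : ℕ} (g : Fin m → ℕ) (j : ℕ) :
    (∑ i, Finsupp.single (g i) 1) j = ∑ i : Fin m, (if g i = j then 1 else 0) := by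
  rw [Finsupp.finset_sum_apply]
  exact Finset.sum_congr rfl fun i _ => Finsupp.single_apply

lemma usage_exists {m : ℕ} {g : Fin m → ℕ} {j : ℕ}
    (h : (∑ i, Finsupp.single (g i) 1) j ≠ 0) : ∃ i, g i = j := by
  rw [usage_apply] at h
  obtain ⟨i, _, hi⟩ := Finset.exists_ne_zero_of_sum_ne_zero h
  exact ⟨i, by by_contra hne; simp [hne] at hi⟩

lemma usage_le_one {m : ℕ} {g : Fin m → ℕ} {j : ℕ}
    (h : ∀ i i' : Fin m, g i = j → g i' = j → i = i') :
    (∑ i, Finsupp.single (g i) 1) j ≤ 1 := by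
  classical
  rw [usage_apply, Finset.sum_boole, Nat.cast_id]
  refine Finset.card_le_one.mpr ?_
  intro a ha b hb
  simp only [Finset.mem_filter] at ha hb
  exact h a b ha.2 hb.2

lemma usage_zero {m : ℕ} {g : Fin m → ℕ} {j : ℕ}
    (h : ∀ i : Fin m, g i ≠ j) : (∑ i, Finsupp.single (g i) 1) j = 0 := by
  rw [usage_apply]
  exact Finset.sum_eq_zero fun i _ => by simp [h i]

/-! ### the permanent as a sum over permutations -/

lemma Fh_eq (m : ℕ) : (hankelMatrix k m).permanent
    = ∑ σ : Equiv.Perm (Fin m), ∏ i, (X ((σ i).val + i.val + 1) : MvPolynomial ℕ k) := rfl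

lemma Fh_rev (m : ℕ) : (hankelMatrix k m).permanent
    = ∑ σ : Equiv.Perm (Fin m), ∏ i, (X ((σ i).rev.val + i.rev.val + 1) : MvPolynomial ℕ k) := by
  rw [Fh_eq]
  refine (Fintype.sum_equiv ⟨fun σ => (Fin.revPerm.trans σ).trans Fin.revPerm,
    fun σ => (Fin.revPerm.trans σ).trans Fin.revPerm, fun σ => by ext i; simp,
    fun σ => by ext i; simp⟩ _ _ fun σ => ?_).symm
  refine Fintype.prod_equiv Fin.revPerm _ _ fun i => ?_
  simp

/-! ### range predicate -/

def Rng (N : ℕ) (q : MvPolynomial ℕ k) : Prop := ∀ d ∈ q.support, ∀ j, d j ≠ 0 → 1 ≤ j ∧ j ≤ N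

lemma rng_sum {ι : Type*} {N : ℕ} {s : Finset ι} {f : ι → MvPolynomial ℕ k}
    (h : ∀ i ∈ s, Rng N (f i)) : Rng N (∑ i ∈ s, f i) := by
  intro d hd
  classical
  obtain ⟨i, hi, hdi⟩ := Finset.mem_biUnion.mp (MvPolynomial.support_sum hd)
  exact h i hi d hdi

lemma rng_monomial {N : ℕ} {s : ℕ →₀ ℕ} {c : k} (h : ∀ j, s j ≠ 0 → 1 ≤ j ∧ j ≤ N) :
    Rng N (monomial s c) := by
  intro d hd
  have := MvPolynomial.support_monomial_subset hd
  simp only [Finset.mem_singleton] at this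
  subst this; exact h

lemma rng_mul {N : ℕ} {q r : MvPolynomial ℕ k} (hq : Rng N q) (hr : Rng N r) : Rng N (q * r) := by
  intro d hd j hj
  have hmem := MvPolynomial.support_mul q r hd
  rw [Finset.mem_add] at hmem
  obtain ⟨d1, h1, d2, h2, rfl⟩ := hmem
  rw [Finsupp.add_apply] at hj
  rcases Nat.eq_zero_or_pos (d1 j) with h | h
  · exact hr d2 h2 j (by omega)
  · exact hq d1 h1 j (by omega)

lemma rng_one {N : ℕ} : Rng N (1 : MvPolynomial ℕ k) := by
  have : (1 : MvPolynomial ℕ k) = monomial 0 1 := by simp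
  rw [this]; exact rng_monomial (by simp)

lemma rng_pow {N e : ℕ} {q : MvPolynomial ℕ k} (hq : Rng N q) : Rng N (q ^ e) := by
  induction e with
  | zero => simpa using (rng_one : Rng N (1 : MvPolynomial ℕ k))
  | succ e ih => rw [pow_succ]; exact rng_mul ih hq

lemma rng_X {N j : ℕ} (h1 : 1 ≤ j) (h2 : j ≤ N) : Rng N (X j : MvPolynomial ℕ k) := by
  rw [X_eq]
  refine rng_monomial fun j' hj' => ?_
  rcases eq_or_ne j j' with rfl | hne
  · exact ⟨h1, h2⟩
  · rw [Finsupp.single_eq_of_ne' hne] at hj'; omega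

lemma rng_prod {ι : Type*} {N : ℕ} {s : Finset ι} {f : ι → MvPolynomial ℕ k}
    (h : ∀ i ∈ s, Rng N (f i)) : Rng N (∏ i ∈ s, f i) := by
  classical
  induction s using Finset.cons_induction with
  | empty => simpa using (rng_one : Rng N (1 : MvPolynomial ℕ k))
  | cons a s ha ih =>
    rw [Finset.prod_cons]
    exact rng_mul (h a (Finset.mem_cons_self a s)) (ih fun i hi => h i (Finset.mem_cons_of_mem hi))

lemma rng_Fh {m N : ℕ} (h : 2*m ≤ N + 1) : Rng N ((hankelMatrix k m).permanent) := by
  rw [Fh_eq]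
  refine rng_sum fun σ _ => ?_
  rw [prodX]
  refine rng_monomial fun j hj => ?_
  obtain ⟨i, hi⟩ := usage_exists hj
  have h1 := (σ i).isLt
  have h2 := i.isLt
  omega

/-! ### v-degree-zero predicate -/

def VZ (v : ℕ) (q : MvPolynomial ℕ k) : Prop := ∀ d ∈ q.support, d v = 0

lemma vz_of_rng {N v : ℕ} {q : MvPolynomial ℕ k} (h : Rng N q) (hv : N < v) : VZ v q := by
  intro d hd
  by_contra hne
  have := h d hd v hne
  omega

lemma vz_mul {v : ℕ} {q r : MvPolynomial ℕ k} (hq : VZ v q) (hr : VZ v r) : VZ v (q * r) := by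
  intro d hd
  have hmem := MvPolynomial.support_mul q r hd
  rw [Finset.mem_add] at hmem
  obtain ⟨d1, h1, d2, h2, rfl⟩ := hmem
  rw [Finsupp.add_apply, hq d1 h1, hr d2 h2]

lemma vz_one {v : ℕ} : VZ v (1 : MvPolynomial ℕ k) := by
  intro d hd
  have : (1 : MvPolynomial ℕ k) = monomial 0 1 := by simp
  rw [this] at hd
  have := MvPolynomial.support_monomial_subset hd
  simp only [Finset.mem_singleton] at this
  subst this; rfl

lemma vz_pow {v e : ℕ} {q : MvPolynomial ℕ k} (hq : VZ v q) : VZ v (q ^ e) := by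
  induction e with
  | zero => simpa using (vz_one : VZ v (1 : MvPolynomial ℕ k))
  | succ e ih => rw [pow_succ]; exact vz_mul ih hq

lemma vz_add {v : ℕ} {q r : MvPolynomial ℕ k} (hq : VZ v q) (hr : VZ v r) : VZ v (q + r) := by
  intro d hd
  rcases Finset.mem_union.mp (MvPolynomial.support_add hd) with h | h
  exacts [hq d h, hr d h]

lemma vz_Xpow {v w e : ℕ} (hvw : w ≠ v) : VZ v ((X w : MvPolynomial ℕ k) ^ e) := by
  intro d hd
  rw [X_pow_eq_monomial] at hd
  have := MvPolynomial.support_monomial_subset hd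
  simp only [Finset.mem_singleton] at this
  subst this
  exact Finsupp.single_eq_of_ne' hvw

lemma vz_Fh {m N : ℕ} (h : 2*m ≤ N) : VZ N ((hankelMatrix k m).permanent) := by
  rcases Nat.eq_zero_or_pos N with rfl | hN
  · have hm : m = 0 := by omega
    subst hm
    have h0 : (hankelMatrix k 0).permanent = 1 := Matrix.permanent_isEmpty
    rw [h0]; exact vz_one
  · exact vz_of_rng (rng_Fh (by omega : 2*m ≤ (N-1)+1)) (by omega)

/-! ### coefficient extraction -/

lemma coeff_Xpow_mul_of_ne {v j : ℕ} {Q : MvPolynomial ℕ k} (hQ : VZ v Q)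
    {D : ℕ →₀ ℕ} (hD : D v ≠ j) : coeff D ((X v : MvPolynomial ℕ k) ^ j * Q) = 0 := by
  rw [mul_comm, X_pow_eq_monomial, coeff_mul_monomial']
  split_ifs with h
  · have hle : j ≤ D v := by simpa [Finsupp.single_le_iff] using h
    have : (D - Finsupp.single v j) v ≠ 0 := by
      rw [Finsupp.tsub_apply, Finsupp.single_eq_same]; omega
    rcases eq_or_ne (coeff (D - Finsupp.single v j) Q) 0 with h0 | h0
    · rw [h0, zero_mul]
    · exact absurd (hQ _ (mem_support_iff.mpr h0)) this
  · rfl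

lemma coeff_Xpow_mul_self {v j : ℕ} {Q : MvPolynomial ℕ k} (b : ℕ →₀ ℕ) :
    coeff (b + Finsupp.single v j) ((X v : MvPolynomial ℕ k) ^ j * Q) = coeff b Q := by
  rw [mul_comm, X_pow_eq_monomial, coeff_mul_monomial, mul_one]

/-! ### the reduced target exponent vector -/

noncomputable def avec (p : ℕ) : ℕ → (ℕ →₀ ℕ)
  | 0 => 0
  | 1 => Finsupp.single 1 (p-1)
  | (n+2) => avec p (n+1) + Finsupp.single (2*n+2) 2 + Finsupp.single (2*n+3) (p-2)

lemma avec_zero_of_ge (p : ℕ) : ∀ n j, 2*n ≤ j → avec p n j = 0 := by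
  intro n
  induction n with
  | zero => intro j _; rfl
  | succ n ih =>
    intro j hj
    match n, ih with
    | 0, _ =>
      exact Finsupp.single_eq_of_ne (by omega)
    | (n+1), ih =>
      rw [show avec p (n+2) = avec p (n+1) + Finsupp.single (2*n+2) 2
          + Finsupp.single (2*n+3) (p-2) from rfl]
      rw [Finsupp.add_apply, Finsupp.add_apply, ih j (by omega),
        Finsupp.single_eq_of_ne (by omega), Finsupp.single_eq_of_ne (by omega)]
      rfl

/-! ### decomposition of the Hankel permanent -/

lemma termA {m : ℕ} (τ : Equiv.Perm (Fin (m+1))) :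
    (∏ i : Fin (m+2),
      (X (((Equiv.Perm.decomposeFin.symm (0, τ)) i).rev.val + i.rev.val + 1) : MvPolynomial ℕ k))
    = X (2*m+3) * ∏ i : Fin (m+1), X ((τ i).rev.val + i.rev.val + 1) := by
  rw [Fin.prod_univ_succ]
  congr 1
  · congr 1
    simp
    omega
  · refine Finset.prod_congr rfl fun i _ => ?_
    rw [Equiv.Perm.decomposeFin_symm_apply_succ]
    simp only [Equiv.swap_self, Equiv.refl_apply]
    congr 1
    have h1 := (τ i).isLt
    have h2 := i.isLt
    simp only [Fin.val_rev, Fin.val_succ]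
    omega

lemma termB {m : ℕ} (ρ : Equiv.Perm (Fin m)) :
    (∏ i : Fin (m+2),
      (X (((Equiv.Perm.decomposeFin.symm (1, Equiv.Perm.decomposeFin.symm (0, ρ))) i).rev.val
        + i.rev.val + 1) : MvPolynomial ℕ k))
    = X (2*m+2)^2 * ∏ j : Fin m, X ((ρ j).rev.val + j.rev.val + 1) := by
  rw [Fin.prod_univ_succ, Fin.prod_univ_succ, pow_two, mul_assoc]
  refine congrArg₂ (· * ·) ?_ ?_
  · congr 1
    simp
    omega
  refine congrArg₂ (· * ·) ?_ ?_
  · rw [Equiv.Perm.decomposeFin_symm_apply_succ]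
    rw [Equiv.Perm.decomposeFin_symm_apply_zero]
    simp only [Fin.succ_zero_eq_one]
    rw [Equiv.swap_apply_right]
    congr 1
    simp
    omega
  · refine Finset.prod_congr rfl fun j _ => ?_
    rw [Equiv.Perm.decomposeFin_symm_apply_succ]
    rw [Equiv.Perm.decomposeFin_symm_apply_succ]
    simp only [Equiv.swap_self, Equiv.refl_apply]
    rw [Equiv.swap_apply_of_ne_of_ne (by exact Fin.succ_ne_zero _)
      (by intro h; exact Fin.succ_ne_zero (ρ j) (by
        have := Fin.succ_injective _ (h.trans Fin.succ_zero_eq_one.symm); exact this))]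
    congr 1
    have h1 := (ρ j).isLt
    have h2 := j.isLt
    simp only [Fin.val_rev, Fin.val_succ]
    omega

lemma term_supp {m : ℕ} (σ : Equiv.Perm (Fin (m+2))) (h0 : σ 0 ≠ 0)
    (h1 : ¬(σ 0 = 1 ∧ σ 1 = 0)) :
    ∀ d ∈ (∏ i, (X ((σ i).rev.val + i.rev.val + 1) : MvPolynomial ℕ k)).support,
      d (2*m+3) = 0 ∧ d (2*m+2) ≤ 1 := by
  intro d hd
  rw [prodX] at hd
  have hds := MvPolynomial.support_monomial_subset hd
  simp only [Finset.mem_singleton] at hds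
  subst hds
  constructor
  · apply usage_zero
    intro i hgi
    have e1 := (σ i).isLt
    have e2 := i.isLt
    simp only [Fin.val_rev] at hgi
    have hi0 : i.val = 0 ∧ (σ i).val = 0 := by omega
    have hieq : i = 0 := Fin.ext hi0.1
    have h5 : σ i = 0 := by apply Fin.ext; simpa using hi0.2
    rw [hieq] at h5
    exact h0 h5
  · apply usage_le_one
    intro i i' hi hi'
    have e1 := (σ i).isLt
    have e2 := i.isLt
    have e3 := (σ i').isLt
    have e4 := i'.isLt
    simp only [Fin.val_rev] at hi hi'
    have c1 : (i.val = 0 ∧ (σ i).val = 1) ∨ (i.val = 1 ∧ (σ i).val = 0) := by omega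
    have c2 : (i'.val = 0 ∧ (σ i').val = 1) ∨ (i'.val = 1 ∧ (σ i').val = 0) := by omega
    rcases c1 with ⟨ha, hb⟩ | ⟨ha, hb⟩ <;> rcases c2 with ⟨ha', hb'⟩ | ⟨ha', hb'⟩
    · exact Fin.ext (ha.trans ha'.symm)
    · exfalso
      apply h1
      constructor
      · rw [show (0 : Fin (m+2)) = i from (Fin.ext ha).symm]; exact Fin.ext hb
      · rw [show (1 : Fin (m+2)) = i' from (Fin.ext (by simpa using ha'.symm))]
        exact Fin.ext hb'
    · exfalso
      apply h1
      constructor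
      · rw [show (0 : Fin (m+2)) = i' from (Fin.ext ha').symm]; exact Fin.ext hb'
      · rw [show (1 : Fin (m+2)) = i from (Fin.ext (by simpa using ha.symm))]
        exact Fin.ext hb
    · exact Fin.ext (ha.trans ha'.symm)

lemma decomp (m : ℕ) : ∃ R : MvPolynomial ℕ k,
    (hankelMatrix k (m+2)).permanent = X (2*m+3) * (hankelMatrix k (m+1)).permanent
      + X (2*m+2)^2 * (hankelMatrix k m).permanent + R
    ∧ ∀ d ∈ R.support, d (2*m+3) = 0 ∧ d (2*m+2) ≤ 1 := by
  classical
  set f : Equiv.Perm (Fin (m+2)) → MvPolynomial ℕ k :=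
    fun σ => ∏ i, X ((σ i).rev.val + i.rev.val + 1) with hf
  set S1 : MvPolynomial ℕ k :=
    ∑ c : Fin m, ∑ τ : Equiv.Perm (Fin (m+1)),
      f (Equiv.Perm.decomposeFin.symm (c.succ.succ, τ)) with hS1
  set S2 : MvPolynomial ℕ k :=
    ∑ q : Fin m, ∑ ρ : Equiv.Perm (Fin m),
      f (Equiv.Perm.decomposeFin.symm ((0 : Fin (m+1)).succ,
          Equiv.Perm.decomposeFin.symm (q.succ, ρ))) with hS2
  refine ⟨S2 + S1, ?_, ?_⟩
  · have e0 : (hankelMatrix k (m+2)).permanent = ∑ σ : Equiv.Perm (Fin (m+2)), f σ := Fh_rev _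
    have e1 : ∑ σ : Equiv.Perm (Fin (m+2)), f σ
        = ∑ x : Fin (m+2) × Equiv.Perm (Fin (m+1)), f (Equiv.Perm.decomposeFin.symm x) :=
      (Equiv.sum_comp Equiv.Perm.decomposeFin.symm f).symm
    rw [e0, e1, Fintype.sum_prod_type, Fin.sum_univ_succ]
    have eA : ∑ τ : Equiv.Perm (Fin (m+1)), f (Equiv.Perm.decomposeFin.symm (0, τ))
        = X (2*m+3) * (hankelMatrix k (m+1)).permanent := by
      rw [Fh_rev, Finset.mul_sum]
      exact Finset.sum_congr rfl fun τ _ => termA τ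
    rw [eA, Fin.sum_univ_succ]
    have e2 : ∑ τ : Equiv.Perm (Fin (m+1)),
          f (Equiv.Perm.decomposeFin.symm ((0 : Fin (m+1)).succ, τ))
        = ∑ x : Fin (m+1) × Equiv.Perm (Fin m),
            f (Equiv.Perm.decomposeFin.symm ((0 : Fin (m+1)).succ,
                Equiv.Perm.decomposeFin.symm x)) :=
      (Equiv.sum_comp Equiv.Perm.decomposeFin.symm _).symm
    rw [e2, Fintype.sum_prod_type, Fin.sum_univ_succ]
    have eB : ∑ ρ : Equiv.Perm (Fin m),
        f (Equiv.Perm.decomposeFin.symm ((0 : Fin (m+1)).succ,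
            Equiv.Perm.decomposeFin.symm (0, ρ)))
        = X (2*m+2)^2 * (hankelMatrix k m).permanent := by
      rw [Fh_rev, Finset.mul_sum]
      refine Finset.sum_congr rfl fun ρ _ => ?_
      rw [show ((0 : Fin (m+1)).succ) = (1 : Fin (m+2)) from Fin.succ_zero_eq_one]
      exact termB ρ
    rw [eB]
    ring
  · intro d hd
    have hsub := MvPolynomial.support_add hd
    rw [Finset.mem_union] at hsub
    rcases hsub with h | h
    · obtain ⟨q, _, h⟩ := Finset.mem_biUnion.mp (MvPolynomial.support_sum h)
      obtain ⟨ρ, _, h⟩ := Finset.mem_biUnion.mp (MvPolynomial.support_sum h)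
      refine term_supp _ ?_ ?_ d h
      · rw [Equiv.Perm.decomposeFin_symm_apply_zero, Fin.succ_zero_eq_one]
        simp [Fin.ext_iff]
      · rintro ⟨-, hc⟩
        rw [show (1 : Fin (m+2)) = ((0 : Fin (m+1)).succ) from Fin.succ_zero_eq_one.symm,
          Equiv.Perm.decomposeFin_symm_apply_succ] at hc
        rw [Equiv.Perm.decomposeFin_symm_apply_zero] at hc
        rw [Fin.succ_zero_eq_one] at hc
        rcases eq_or_ne ((q.succ : Fin (m+1)).succ : Fin (m+2)) 1 with he | he
        · exfalso
          have h6 : (q.succ : Fin (m+1)) = 0 :=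
            Fin.succ_injective _ (he.trans Fin.succ_zero_eq_one.symm)
          exact Fin.succ_ne_zero _ h6
        · rw [Equiv.swap_apply_of_ne_of_ne (Fin.succ_ne_zero _) he] at hc
          exact Fin.succ_ne_zero _ hc
    · obtain ⟨c, _, h⟩ := Finset.mem_biUnion.mp (MvPolynomial.support_sum h)
      obtain ⟨τ, _, h⟩ := Finset.mem_biUnion.mp (MvPolynomial.support_sum h)
      refine term_supp _ ?_ ?_ d h
      · rw [Equiv.Perm.decomposeFin_symm_apply_zero]
        exact Fin.succ_ne_zero _
      · rintro ⟨hc, -⟩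
        rw [Equiv.Perm.decomposeFin_symm_apply_zero] at hc
        have : (c.succ : Fin (m+1)) = 0 :=
          Fin.succ_injective _ (hc.trans Fin.succ_zero_eq_one.symm)
        exact Fin.succ_ne_zero _ this

/-! ### the coefficient recursion -/

lemma chain (p : ℕ) (hp3 : 3 ≤ p) : ∀ m : ℕ,
    coeff (avec p (m+1))
        ((hankelMatrix k m).permanent * (hankelMatrix k (m+1)).permanent ^ (p-1))
      = (((p-1)^m : ℕ) : k) := by
  intro m
  induction m with
  | zero =>
    have h0 : (hankelMatrix k 0).permanent = 1 := Matrix.permanent_isEmpty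
    have h1 : (hankelMatrix k 1).permanent = X 1 := by
      rw [Matrix.permanent_unique]
      rfl
    rw [h0, h1, one_mul, X_pow_eq_monomial]
    show coeff (Finsupp.single 1 (p-1)) _ = _
    rw [coeff_monomial, if_pos rfl]
    norm_num
  | succ m ih =>
    obtain ⟨R, hR, hRsupp⟩ := decomp (k := k) m
    set f := (hankelMatrix k (m+1)).permanent with hfdef
    set e := (hankelMatrix k m).permanent with hedef
    set G : MvPolynomial ℕ k := X (2*m+2)^2 * e + R with hG
    have hvzf : VZ (2*m+3) f := vz_Fh (by omega)
    have hvze : VZ (2*m+3) e := vz_Fh (by omega)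
    have hvzG : VZ (2*m+3) G := vz_add (vz_mul (vz_Xpow (by omega)) hvze)
      (fun d hd => (hRsupp d hd).1)
    have hb : avec p (m+2) = (avec p (m+1) + Finsupp.single (2*m+2) 2)
        + Finsupp.single (2*m+3) (p-2) := by
      rw [show avec p (m+2) = avec p (m+1) + Finsupp.single (2*m+2) 2
        + Finsupp.single (2*m+3) (p-2) from rfl]
    have hfe : (hankelMatrix k (m+2)).permanent = X (2*m+3) * f + G := by
      rw [hR]; ring
    rw [hfe]
    rw [add_pow]
    rw [Finset.mul_sum]
    rw [coeff_sum]
    have hDv : (avec p (m+2)) (2*m+3) = p - 2 := by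
      rw [hb, Finsupp.add_apply, Finsupp.add_apply, avec_zero_of_ge p (m+1) _ (by omega),
        Finsupp.single_eq_of_ne (by omega), Finsupp.single_eq_same]
      omega
    rw [Finset.sum_eq_single (p-2)]
    · have harr : f * ((X (2*m+3) * f) ^ (p-2) * G ^ (p - 1 - (p-2))
            * ((p-1).choose (p-2) : MvPolynomial ℕ k))
          = ((p-1).choose (p-2))
            • ((X (2*m+3) : MvPolynomial ℕ k) ^ (p-2) * (f ^ (p-2+1) * G)) := by
        rw [nsmul_eq_mul, mul_pow, show p - 1 - (p-2) = 1 by omega, pow_one]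
        ring
      rw [harr, coeff_smul, hb, coeff_Xpow_mul_self]
      have hsplit : f ^ (p-2+1) * G
          = X (2*m+2) ^ 2 * (f ^ (p-2+1) * e) + f ^ (p-2+1) * R := by
        rw [hG]; ring
      rw [hsplit, coeff_add, coeff_Xpow_mul_self]
      have hzero : coeff (avec p (m+1) + Finsupp.single (2*m+2) 2) (f ^ (p-2+1) * R) = 0 := by
        rw [← notMem_support_iff]
        intro hmem
        have h2 := MvPolynomial.support_mul _ _ hmem
        rw [Finset.mem_add] at h2
        obtain ⟨d1, h1, d2, h2, heq⟩ := h2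
        have hd1 : d1 (2*m+2) = 0 := vz_pow (vz_Fh (by omega)) d1 h1
        have hd2 : d2 (2*m+2) ≤ 1 := (hRsupp d2 h2).2
        have hl : ((avec p (m+1) + Finsupp.single (2*m+2) 2 : ℕ →₀ ℕ)) (2*m+2) = 2 := by
          rw [Finsupp.add_apply, avec_zero_of_ge p (m+1) _ (by omega), Finsupp.single_eq_same]
        rw [← heq, Finsupp.add_apply] at hl
        omega
      rw [hzero, add_zero]
      rw [show p - 2 + 1 = p - 1 by omega]
      rw [mul_comm (f ^ (p-1)) e, ih]
      rw [show (p-1).choose (p-2) = p - 1 by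
        rw [show p-2 = (p-1)-1 by omega, Nat.choose_symm (by omega), Nat.choose_one_right]]
      rw [nsmul_eq_mul]
      push_cast
      ring
    · intro b _ hbne
      have harr : f * ((X (2*m+3) * f) ^ b * G ^ (p - 1 - b)
            * ((p-1).choose b : MvPolynomial ℕ k))
          = ((p-1).choose b)
            • ((X (2*m+3) : MvPolynomial ℕ k) ^ b * (f ^ (b+1) * G ^ (p-1-b))) := by
        rw [nsmul_eq_mul, mul_pow]; ring
      rw [harr, coeff_smul,
        coeff_Xpow_mul_of_ne (vz_mul (vz_pow hvzf) (vz_pow hvzG)) (by rw [hDv]; omega),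
        smul_zero]
    · intro hmem
      exact absurd (Finset.mem_range.mpr (by omega)) hmem

/-! ### homogeneity -/

def Hom (D : ℕ) (q : MvPolynomial ℕ k) : Prop := ∀ d ∈ q.support, Finsupp.degree d = D

lemma degree_add' (a b : ℕ →₀ ℕ) :
    Finsupp.degree (a + b) = Finsupp.degree a + Finsupp.degree b := by
  simp only [Finsupp.degree_eq_weight_one, map_add]

lemma hom_mul {D E : ℕ} {q r : MvPolynomial ℕ k} (hq : Hom D q) (hr : Hom E r) :
    Hom (D + E) (q * r) := by
  intro d hd
  have hmem := MvPolynomial.support_mul q r hd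
  rw [Finset.mem_add] at hmem
  obtain ⟨d1, h1, d2, h2, rfl⟩ := hmem
  rw [degree_add', hq d1 h1, hr d2 h2]

lemma hom_monomial {D : ℕ} {s : ℕ →₀ ℕ} {c : k} (h : Finsupp.degree s = D) :
    Hom D (monomial s c) := by
  intro d hd
  have := MvPolynomial.support_monomial_subset hd
  simp only [Finset.mem_singleton] at this
  subst this; exact h

lemma hom_one : Hom 0 (1 : MvPolynomial ℕ k) := by
  have : (1 : MvPolynomial ℕ k) = monomial 0 1 := by simp
  rw [this]; exact hom_monomial (map_zero _)

lemma hom_pow {D e : ℕ} {q : MvPolynomial ℕ k} (hq : Hom D q) : Hom (e * D) (q ^ e) := by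
  induction e with
  | zero => simpa using (hom_one : Hom 0 (1 : MvPolynomial ℕ k))
  | succ e ih =>
    rw [pow_succ]
    have := hom_mul ih hq
    rwa [show e * D + D = (e+1) * D by ring] at this

lemma hom_sum {ι : Type*} {D : ℕ} {s : Finset ι} {f : ι → MvPolynomial ℕ k}
    (h : ∀ i ∈ s, Hom D (f i)) : Hom D (∑ i ∈ s, f i) := by
  intro d hd
  classical
  obtain ⟨i, hi, hdi⟩ := Finset.mem_biUnion.mp (MvPolynomial.support_sum hd)
  exact h i hi d hdi

lemma degree_single' (i c : ℕ) : Finsupp.degree (Finsupp.single i c) = c := by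
  rcases eq_or_ne c 0 with rfl | h
  · simp
  · rw [Finsupp.degree_apply, Finsupp.support_single_ne_zero _ h, Finset.sum_singleton,
      Finsupp.single_eq_same]

lemma degree_finset_sum {ι : Type*} (s : Finset ι) (f : ι → (ℕ →₀ ℕ)) :
    Finsupp.degree (∑ i ∈ s, f i) = ∑ i ∈ s, Finsupp.degree (f i) := by
  simp only [Finsupp.degree_eq_weight_one]
  exact map_sum _ _ _

lemma degree_usage {m : ℕ} (g : Fin m → ℕ) :
    Finsupp.degree (∑ i : Fin m, Finsupp.single (g i) 1) = m := by
  rw [degree_finset_sum]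
  simp [degree_single']

lemma degree_sum_single {c : ℕ} {s : Finset ℕ} :
    Finsupp.degree (∑ i ∈ s, Finsupp.single i c) = s.card * c := by
  rw [degree_finset_sum]
  simp [degree_single', mul_comm]

lemma hom_Fh (m : ℕ) : Hom m ((hankelMatrix k m).permanent) := by
  rw [Fh_eq]
  refine hom_sum fun σ _ => ?_
  rw [prodX]
  exact hom_monomial (degree_usage _)

lemma degree_sum_single_comp {s : Finset ℕ} (g : ℕ → ℕ) (c : ℕ) :
    Finsupp.degree (∑ i ∈ s, Finsupp.single (g i) c) = s.card * c := by
  rw [degree_finset_sum]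
  simp [degree_single', mul_comm]

lemma sum_single_comp_apply_ne {s : Finset ℕ} {g : ℕ → ℕ} {c j : ℕ}
    (h : (∑ i ∈ s, Finsupp.single (g i) c : ℕ →₀ ℕ) j ≠ 0) : ∃ i ∈ s, g i = j := by
  rw [Finsupp.finset_sum_apply] at h
  obtain ⟨i, hi, hne⟩ := Finset.exists_ne_zero_of_sum_ne_zero h
  refine ⟨i, hi, ?_⟩
  by_contra hc
  rw [Finsupp.single_eq_of_ne' hc] at hne
  exact hne rfl

lemma tgt_apply (c : ℕ) (s : Finset ℕ) (j : ℕ) :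
    (∑ i ∈ s, Finsupp.single i c : ℕ →₀ ℕ) j = if j ∈ s then c else 0 := by
  rw [Finsupp.finset_sum_apply, Finset.sum_congr rfl (fun i _ => Finsupp.single_apply)]
  exact Finset.sum_ite_eq' s j (fun _ => c)

/-- the pinning lemma: a monomial of a homogeneous polynomial of the full degree, with all
exponents `≤ p-1`, must be the full target monomial. -/
lemma pin {p m : ℕ} (hp3 : 3 ≤ p) {q : MvPolynomial ℕ k}
    (hh : Hom ((2*m+1)*(p-1)) q) (hr : Rng (2*m+1) q)
    {d : ℕ →₀ ℕ} (hd : d ∈ q.support) (hle : ∀ j, d j ≤ p-1) :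
    d = ∑ i ∈ Finset.Icc 1 (2*m+1), Finsupp.single i (p-1) := by
  have hsupp : d.support ⊆ Finset.Icc 1 (2*m+1) := by
    intro j hj
    rw [Finsupp.mem_support_iff] at hj
    have := hr d hd j hj
    rw [Finset.mem_Icc]; omega
  have hsum : ∑ j ∈ Finset.Icc 1 (2*m+1), d j = (2*m+1)*(p-1) := by
    rw [← hh d hd, Finsupp.degree_apply]
    exact (Finset.sum_subset hsupp (fun j _ hj => Finsupp.notMem_support_iff.mp hj)).symm
  have hconst : ∑ _j ∈ Finset.Icc 1 (2*m+1), (p-1) = (2*m+1)*(p-1) := by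
    rw [Finset.sum_const, Nat.card_Icc, smul_eq_mul,
      show 2*m+1+1-1 = 2*m+1 from rfl]
  have heach := (Finset.sum_eq_sum_iff_of_le (fun i _ => hle i)).mp (by rw [hsum, hconst])
  ext j
  rw [tgt_apply]
  split_ifs with hj
  · exact heach j hj
  · by_contra hne
    exact hj (hsupp (Finsupp.mem_support_iff.mpr hne))

lemma avec_add_mvec (p : ℕ) (hp3 : 3 ≤ p) : ∀ m : ℕ,
    avec p (m+1) + ((∑ i ∈ Finset.Icc 1 m, Finsupp.single (2*i+1) 1)
      + ∑ i ∈ Finset.Icc 1 m, Finsupp.single (2*i) (p-3))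
    = ∑ i ∈ Finset.Icc 1 (2*m+1), Finsupp.single i (p-1) := by
  intro m
  induction m with
  | zero => simp [show avec p 1 = Finsupp.single 1 (p-1) from rfl]
  | succ m ih =>
    ext j
    have ihj := DFunLike.congr_fun ih j
    rw [Finset.sum_Icc_succ_top (by omega : 1 ≤ m+1),
      Finset.sum_Icc_succ_top (by omega : 1 ≤ m+1)]
    rw [show avec p (m+2) = avec p (m+1) + Finsupp.single (2*m+2) 2
        + Finsupp.single (2*m+3) (p-2) from rfl]
    rw [tgt_apply] at ihj ⊢
    simp only [Finsupp.add_apply, Finsupp.single_apply, Finset.mem_Icc] at ihj ⊢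
    split_ifs at ihj ⊢ <;> omega

end Stmt9Aux

/-- With `f_m = perm(Z_m)` (so `f₀ = 1`), for every `n ≥ 1` one has, modulo the ideal
`(z₁^p, …, z_{2n-1}^p)`:
`f_{n-1} f_n^{p-1} (∏_{i=1}^{n-1} z_{2i+1}) (∏_{i=1}^{n-1} z_{2i})^{p-3}
  ≡ (-1)^{n+1} (∏_{i=1}^{2n-1} z_i)^{p-1}`. -/
theorem stmt9 {k : Type*} [Field k] (p : ℕ) (hp : p.Prime) (hp2 : 2 < p) [CharP k p]
    (n : ℕ) (hn : 1 ≤ n) :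
    (hankelMatrix k (n - 1)).permanent * (hankelMatrix k n).permanent ^ (p - 1) *
          (∏ i ∈ Finset.Icc 1 (n - 1), X (2 * i + 1)) *
          (∏ i ∈ Finset.Icc 1 (n - 1), X (2 * i)) ^ (p - 3) -
        (-1) ^ (n + 1) * (∏ i ∈ Finset.Icc 1 (2 * n - 1), X i) ^ (p - 1)
      ∈ Ideal.span ((fun i => (X i : MvPolynomial ℕ k) ^ p) '' Set.Icc 1 (2 * n - 1)) := by
  classical
  open Stmt9Aux Finset in
  obtain ⟨m, rfl⟩ : ∃ m, n = m + 1 := ⟨n-1, by omega⟩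
  have hp3 : 3 ≤ p := hp2
  rw [show (m+1) - 1 = m from rfl, show 2*(m+1) - 1 = 2*m+1 by omega]
  set Mex : ℕ →₀ ℕ := (∑ i ∈ Finset.Icc 1 m, Finsupp.single (2*i+1) 1)
      + ∑ i ∈ Finset.Icc 1 m, Finsupp.single (2*i) (p-3) with hMex
  set tgt : ℕ →₀ ℕ := ∑ i ∈ Finset.Icc 1 (2*m+1), Finsupp.single i (p-1) with htgt
  -- convert the monomial products
  have hP1 : (∏ i ∈ Finset.Icc 1 m, (X (2*i+1) : MvPolynomial ℕ k))
      = monomial (∑ i ∈ Finset.Icc 1 m, Finsupp.single (2*i+1) 1) 1 := by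
    simp_rw [X_eq]; exact monomial_prod _ _
  have hP2 : (∏ i ∈ Finset.Icc 1 m, (X (2*i) : MvPolynomial ℕ k)) ^ (p-3)
      = monomial (∑ i ∈ Finset.Icc 1 m, Finsupp.single (2*i) (p-3)) 1 := by
    rw [← Finset.prod_pow]
    simp_rw [X_pow_eq_monomial]
    exact monomial_prod _ _
  have hPt : ((∏ i ∈ Finset.Icc 1 (2*m+1), (X i : MvPolynomial ℕ k)) ^ (p-1))
      = monomial tgt 1 := by
    rw [← Finset.prod_pow]
    simp_rw [X_pow_eq_monomial]
    exact monomial_prod _ _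
  have hcm : ((-1 : MvPolynomial ℕ k)) ^ ((m+1) + 1) * monomial tgt 1
      = monomial tgt ((-1 : k)^m) := by
    have h1 : ((-1 : MvPolynomial ℕ k)) ^ ((m+1)+1) = C ((-1 : k)^((m+1)+1)) := by
      rw [map_pow, map_neg, map_one]
    rw [h1, C_mul_monomial, mul_one, show (m+1)+1 = m+2 from rfl, pow_succ, pow_succ]
    ring_nf
  rw [mul_assoc _ (∏ i ∈ Finset.Icc 1 m, (X (2*i+1) : MvPolynomial ℕ k)) _, hP1, hP2,
    monomial_mul, mul_one, hPt, hcm]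
  set Q : MvPolynomial ℕ k :=
    (hankelMatrix k m).permanent * (hankelMatrix k (m+1)).permanent ^ (p-1) with hQ
  -- key facts about T := Q * monomial Mex 1
  have hcoeff : coeff tgt (Q * monomial Mex 1) = ((-1 : k)^m) := by
    have htm : tgt = avec p (m+1) + Mex := by
      rw [htgt, ← avec_add_mvec p hp3 m, hMex]
    rw [htm, coeff_mul_monomial, mul_one, hQ, chain p hp3 m]
    have hpc : ((p-1 : ℕ) : k) = -1 := by
      rw [Nat.cast_sub (by omega : 1 ≤ p), CharP.cast_eq_zero k p, Nat.cast_one]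
      ring
    rw [Nat.cast_pow, hpc]
  have hhom : Hom ((2*m+1)*(p-1)) (Q * monomial Mex 1) := by
    have h1 : Hom (m + (p-1)*(m+1) + (m*1 + m*(p-3))) (Q * monomial Mex 1) := by
      refine hom_mul (hom_mul (hom_Fh m) (hom_pow (hom_Fh (m+1)))) (hom_monomial ?_)
      rw [hMex, degree_add', degree_sum_single_comp, degree_sum_single_comp, Nat.card_Icc,
        show m+1-1 = m from rfl]
    rwa [show m + (p-1)*(m+1) + (m*1 + m*(p-3)) = (2*m+1)*(p-1) by
      obtain ⟨r, rfl⟩ : ∃ r, p = r + 3 := ⟨p - 3, by omega⟩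
      rw [show r+3-1 = r+2 by omega, show r+3-3 = r by omega]
      ring] at h1
  have hrng : Rng (2*m+1) (Q * monomial Mex 1) := by
    refine rng_mul (rng_mul (rng_Fh (by omega)) (rng_pow (rng_Fh (by omega))))
      (rng_monomial ?_)
    intro j hj
    rw [hMex, Finsupp.add_apply] at hj
    rcases Nat.eq_zero_or_pos ((∑ i ∈ Finset.Icc 1 m, Finsupp.single (2*i+1) 1 : ℕ →₀ ℕ) j)
      with h | h
    · have h2 : (∑ i ∈ Finset.Icc 1 m, Finsupp.single (2*i) (p-3) : ℕ →₀ ℕ) j ≠ 0 := by omega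
      obtain ⟨i, hi, rfl⟩ := sum_single_comp_apply_ne h2
      rw [Finset.mem_Icc] at hi
      omega
    · obtain ⟨i, hi, rfl⟩ := sum_single_comp_apply_ne (by omega :
        (∑ i ∈ Finset.Icc 1 m, Finsupp.single (2*i+1) 1 : ℕ →₀ ℕ) j ≠ 0)
      rw [Finset.mem_Icc] at hi
      omega
  -- rewrite the ideal as a monomial ideal
  rw [show (fun i => (X i : MvPolynomial ℕ k)^p) '' Set.Icc 1 (2*m+1)
      = (fun s => monomial s (1:k)) '' ((fun i => Finsupp.single i p) '' Set.Icc 1 (2*m+1)) by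
    rw [Set.image_image]
    exact Set.image_congr fun i _ => X_pow_eq_monomial]
  rw [MvPolynomial.mem_ideal_span_monomial_image]
  intro d hd
  have hdne : coeff d (Q * monomial Mex 1 - monomial tgt ((-1 : k)^m)) ≠ 0 :=
    mem_support_iff.mp hd
  rcases eq_or_ne d tgt with rfl | hne
  · exfalso
    apply hdne
    rw [coeff_sub, hcoeff, coeff_monomial, if_pos rfl, sub_self]
  · have hdT : d ∈ (Q * monomial Mex 1).support := by
      rcases Finset.mem_union.mp (MvPolynomial.support_sub _ _ _ hd) with h | h
      · exact h
      · exfalso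
        have := MvPolynomial.support_monomial_subset h
        simp only [Finset.mem_singleton] at this
        exact hne this
    have hbig : ∃ j, p ≤ d j := by
      by_contra hno
      push_neg at hno
      exact hne (pin hp3 hhom hrng hdT (fun j => by have := hno j; omega))
    obtain ⟨j, hj⟩ := hbig
    refine ⟨Finsupp.single j p, ⟨j, ?_, rfl⟩, ?_⟩
    · have hjr := hrng d hdT j (by omega)
      exact Set.mem_Icc.mpr ⟨hjr.1, hjr.2⟩
    · rw [Finsupp.single_le_iff]
      exact hj
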